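/- arXiv:2402.15053 — 2 statements merged into one kernel-verified Lean document; each statement's English description precedes it below -/
import Mathlib

section
/- Let (X, Y) be random vectors in ℝ^d × ℝ^n with a strictly positive joint Lebesgue density π_{X,Y}, marginal densities π_X(x) = ∫ π_{X,Y}(x,y) dy and π_Y(y) = ∫ π_{X,Y}(x,y) dx, and conditional density π_{X|Y}(x|y) = π_{X,Y}(x,y)/π_Y(y), assumed continuously differentiable in y for each x. Suppose π_Y satisfies the log-Sobolev inequality with constant κ ≥ 1 and symmetric positive definite matrix Γ ∈ ℝ^{n×n}: for every continuously differentiable h: ℝ^n → ℝ with h² log h², h², and ‖∇h‖²_Γ integrable against π_Y, Ent_{π_Y}[h²] ≤ 2κ ∫ ‖∇h(y)‖²_Γ π_Y(y) dy. Assume all integrals below are finite. Then the mutual information satisfies I(X;Y) ≤ (κ/2) ∫∫ ‖∇_y log π_{X|Y}(x|y)‖²_Γ π_{X,Y}(x,y) dx dy. -/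
/-!
For almost every `x`, the conditional law of `Y` given `X = x` has density
`u = π(x, ·) / (π_X(x) π_Y)` with respect to `π_Y`, and `∇_y log u = g x`. Applying the
log-Sobolev inequality to `h = √u` gives `h² = u` and `‖∇h‖²_Γ = u ‖g x‖²_Γ / 4`, hence
`Ent_{π_Y}[u] ≤ (κ/2) ∫ ‖g x y‖²_Γ u(y) π_Y(y) dy`. Multiplied by `π_X(x)`, the left side is
the inner integral of `I(X;Y)` and the right side that of the claimed bound; integrate in `x`.
-/

open MeasureTheory Matrix

/-- The entropy functional `Ent_μ[f] = ∫ f log (f / ∫ f dμ) dμ`. -/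
noncomputable def entFun {α : Type*} [MeasurableSpace α] (μ : Measure α) (f : α → ℝ) : ℝ :=
  ∫ x, f x * Real.log (f x / ∫ y, f y ∂μ) ∂μ

/-- The Γ-weighted squared norm `‖v‖²_Γ = vᵀ Γ v`. -/
noncomputable def quadForm {p : ℕ} (Γ : Matrix (Fin p) (Fin p) ℝ)
    (v : EuclideanSpace ℝ (Fin p)) : ℝ :=
  (v : Fin p → ℝ) ⬝ᵥ Γ.mulVec (v : Fin p → ℝ)

lemma quadForm_smul {p : ℕ} (Γ : Matrix (Fin p) (Fin p) ℝ) (c : ℝ)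
    (v : EuclideanSpace ℝ (Fin p)) : quadForm Γ (c • v) = c ^ 2 * quadForm Γ v := by
  simp only [quadForm, WithLp.ofLp_smul, Matrix.mulVec_smul, dotProduct_smul, smul_dotProduct,
    smul_eq_mul]
  ring

lemma integral_pos_of_forall_pos {α : Type*} [MeasurableSpace α] {μ : Measure α} [NeZero μ]
    {f : α → ℝ} (hf : ∀ x, 0 < f x) (hi : Integrable f μ) : 0 < ∫ x, f x ∂μ := by
  rw [integral_pos_iff_support_of_nonneg (fun x => (hf x).le) hi,
    (Set.eq_univ_of_forall fun x => (hf x).ne' : Function.support f = Set.univ)]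
  exact Measure.measure_univ_pos.mpr (NeZero.ne μ)

section WithDensityOfReal

variable {α : Type*} [MeasurableSpace α] {μ : Measure α} {ρ : α → ℝ}

lemma integral_withDensity_ofReal (hρ : AEMeasurable ρ μ) (hρ0 : ∀ᵐ y ∂μ, 0 ≤ ρ y)
    (f : α → ℝ) :
    ∫ y, f y ∂μ.withDensity (fun y => ENNReal.ofReal (ρ y)) = ∫ y, f y * ρ y ∂μ := by
  rw [integral_withDensity_eq_integral_toReal_smul₀ hρ.ennreal_ofReal
    (ae_of_all _ fun _ => ENNReal.ofReal_lt_top)]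
  refine integral_congr_ae ?_
  filter_upwards [hρ0] with y hy
  rw [ENNReal.toReal_ofReal hy, smul_eq_mul, mul_comm]

lemma integrable_withDensity_ofReal_iff (hρ : AEMeasurable ρ μ) (hρ0 : ∀ᵐ y ∂μ, 0 ≤ ρ y)
    {f : α → ℝ} :
    Integrable f (μ.withDensity fun y => ENNReal.ofReal (ρ y)) ↔
      Integrable (fun y => f y * ρ y) μ := by
  rw [integrable_withDensity_iff_integrable_smul₀' hρ.ennreal_ofReal
    (ae_of_all _ fun _ => ENNReal.ofReal_lt_top)]
  refine integrable_congr ?_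
  filter_upwards [hρ0] with y hy
  rw [ENNReal.toReal_ofReal hy, smul_eq_mul, mul_comm]

end WithDensityOfReal

lemma contDiff_one_of_hasGradientAt {n : ℕ} {L : EuclideanSpace ℝ (Fin n) → ℝ}
    {G : EuclideanSpace ℝ (Fin n) → EuclideanSpace ℝ (Fin n)}
    (hL : ∀ y, HasGradientAt L (G y) y) (hG : Continuous G) : ContDiff ℝ 1 L := by
  rw [contDiff_one_iff_fderiv]
  refine ⟨fun y => (hL y).hasFDerivAt.differentiableAt, ?_⟩
  rw [show fderiv ℝ L = fun y => InnerProductSpace.toDual ℝ _ (G y) from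
    funext fun y => (hL y).hasFDerivAt.fderiv]
  exact (InnerProductSpace.toDual ℝ _).continuous.comp hG

def LogSobolevInequality {n : ℕ} (ν : Measure (EuclideanSpace ℝ (Fin n))) (κ : ℝ)
    (Γ : Matrix (Fin n) (Fin n) ℝ) : Prop :=
  ∀ h : EuclideanSpace ℝ (Fin n) → ℝ, ContDiff ℝ 1 h →
    Integrable (fun y => h y ^ 2 * Real.log (h y ^ 2)) ν →
    Integrable (fun y => h y ^ 2) ν →
    Integrable (fun y => quadForm Γ (gradient h y)) ν →
    entFun ν (fun y => h y ^ 2) ≤ 2 * κ * ∫ y, quadForm Γ (gradient h y) ∂ν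

namespace LogSobolevInequality

variable {n : ℕ} {ν : Measure (EuclideanSpace ℝ (Fin n))} {κ : ℝ}
  {Γ : Matrix (Fin n) (Fin n) ℝ}

theorem entFun_exp_le (hLSI : LogSobolevInequality ν κ Γ) {L : EuclideanSpace ℝ (Fin n) → ℝ}
    {G : EuclideanSpace ℝ (Fin n) → EuclideanSpace ℝ (Fin n)}
    (hL : ∀ y, HasGradientAt L (G y) y) (hG : Continuous G)
    (hent : Integrable (fun y => Real.exp (L y) * L y) ν)
    (hmass : Integrable (fun y => Real.exp (L y)) ν)
    (hfisher : Integrable (fun y => quadForm Γ (G y) * Real.exp (L y)) ν) :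
    entFun ν (fun y => Real.exp (L y)) ≤
      κ / 2 * ∫ y, quadForm Γ (G y) * Real.exp (L y) ∂ν := by
  set h := fun y => Real.exp (L y / 2)
  have hsq : ∀ y, h y ^ 2 = Real.exp (L y) := fun y => by
    rw [← Real.exp_nat_mul]; ring_nf
  have hgrad : ∀ y, gradient h y = (h y / 2) • G y := fun y => by
    refine HasGradientAt.gradient ?_
    rw [hasGradientAt_iff_hasFDerivAt]
    have hd := ((hL y).hasFDerivAt.mul_const 2⁻¹).exp
    simp only [← div_eq_mul_inv] at hd
    refine hd.congr_fderiv ?_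
    rw [map_smulₛₗ, smul_smul]
    simp [h, div_eq_mul_inv]
  have hquad : ∀ y, quadForm Γ (gradient h y) = 4⁻¹ * (quadForm Γ (G y) * Real.exp (L y)) :=
    fun y => by rw [hgrad, quadForm_smul, div_pow, hsq]; ring
  have hC1 : ContDiff ℝ 1 h :=
    (Real.contDiff_exp.of_le le_top).comp
      ((contDiff_one_of_hasGradientAt hL hG).div_const 2)
  have key := hLSI h hC1 (by simpa only [hsq, Real.log_exp] using hent)
    (by simpa only [hsq] using hmass) (by simpa only [hquad] using hfisher.const_mul 4⁻¹)
  simp only [hsq, hquad, integral_const_mul] at key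
  linarith

end LogSobolevInequality

theorem integral_mul_log_div_le_of_logSobolev {n : ℕ} {μ : Measure (EuclideanSpace ℝ (Fin n))}
    [NeZero μ] {κ : ℝ} {Γ : Matrix (Fin n) (Fin n) ℝ} {ρ p : EuclideanSpace ℝ (Fin n) → ℝ}
    (hρ : AEMeasurable ρ μ) (hρpos : ∀ᵐ y ∂μ, 0 < ρ y) (hp : ∀ y, 0 < p y)
    (hLSI : LogSobolevInequality (μ.withDensity fun y => ENNReal.ofReal (ρ y)) κ Γ)
    {G : EuclideanSpace ℝ (Fin n) → EuclideanSpace ℝ (Fin n)}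
    (hG : ∀ y, HasGradientAt (fun y' => Real.log (p y' / ρ y')) (G y) y) (hGc : Continuous G)
    (hpint : Integrable p μ)
    (hent : Integrable (fun y => p y * Real.log (p y / ((∫ z, p z ∂μ) * ρ y))) μ)
    (hfisher : Integrable (fun y => quadForm Γ (G y) * p y) μ) :
    ∫ y, p y * Real.log (p y / ((∫ z, p z ∂μ) * ρ y)) ∂μ ≤
      κ / 2 * ∫ y, quadForm Γ (G y) * p y ∂μ := by
  set Z := ∫ z, p z ∂μ
  have hZ : 0 < Z := integral_pos_of_forall_pos hp hpint
  have hρ0 : ∀ᵐ y ∂μ, 0 ≤ ρ y := hρpos.mono fun y hy => hy.le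
  set L := fun y => Real.log (p y / ρ y)
  have hexpL : ∀ᵐ y ∂μ, Real.exp (L y) = p y / ρ y ∧ Real.exp (L y) * ρ y = p y := by
    filter_upwards [hρpos] with y hy
    have h := Real.exp_log (div_pos (hp y) hy)
    exact ⟨h, by rw [h, div_mul_cancel₀ _ hy.ne']⟩
  have hmass : ∫ y, Real.exp (L y) ∂μ.withDensity (fun y => ENNReal.ofReal (ρ y)) = Z := by
    rw [integral_withDensity_ofReal hρ hρ0]
    exact integral_congr_ae (hexpL.mono fun y hy => hy.2)
  have hentL : ∀ᵐ y ∂μ, Real.exp (L y) * L y * ρ y =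
      p y * Real.log (p y / (Z * ρ y)) + p y * Real.log Z := by
    filter_upwards [hexpL, hρpos] with y ⟨_, h2⟩ hy
    have hsplit : p y / (Z * ρ y) * Z = p y / ρ y := by field_simp
    rw [mul_right_comm, h2, ← mul_add,
      ← Real.log_mul (div_pos (hp y) (mul_pos hZ hy)).ne' hZ.ne', hsplit]
  have key := hLSI.entFun_exp_le hG hGc
    ((integrable_withDensity_ofReal_iff hρ hρ0).2 ((hent.add (hpint.mul_const _)).congr
      (hentL.mono fun y hy => hy.symm)))
    ((integrable_withDensity_ofReal_iff hρ hρ0).2 (hpint.congr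
      (hexpL.mono fun y hy => hy.2.symm)))
    ((integrable_withDensity_ofReal_iff hρ hρ0).2 (hfisher.congr
      (hexpL.mono fun y hy => by dsimp only; rw [mul_assoc, hy.2])))
  rw [entFun, hmass, integral_withDensity_ofReal hρ hρ0, integral_withDensity_ofReal hρ hρ0]
    at key
  convert key using 1
  · refine integral_congr_ae ?_
    filter_upwards [hexpL] with y ⟨h1, h2⟩
    rw [mul_right_comm, h2, h1, div_div, mul_comm Z]
  · congr 1
    refine integral_congr_ae ?_
    filter_upwards [hexpL] with y ⟨_, h2⟩
    rw [mul_assoc, h2]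

theorem mutual_information_le_of_log_sobolev_general
    {d n : ℕ}
    (π : EuclideanSpace ℝ (Fin d) → EuclideanSpace ℝ (Fin n) → ℝ)
    (hπmeas : Measurable (Function.uncurry π))
    (hπpos : ∀ x y, 0 < π x y)
    (hπprob : (∫ q : EuclideanSpace ℝ (Fin d) × EuclideanSpace ℝ (Fin n), π q.1 q.2) = 1)
    (πX : EuclideanSpace ℝ (Fin d) → ℝ) (hπX : ∀ x, πX x = ∫ y, π x y)
    (πY : EuclideanSpace ℝ (Fin n) → ℝ) (hπY : ∀ y, πY y = ∫ x, π x y)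
    -- `g x y` is the gradient in `y` of `log π_{X|Y}(x|y)`, assumed to exist and be
    -- continuous in `y` for each `x`
    (g : EuclideanSpace ℝ (Fin d) → EuclideanSpace ℝ (Fin n) → EuclideanSpace ℝ (Fin n))
    (hg : ∀ x y, HasGradientAt (fun y' => Real.log (π x y' / πY y')) (g x y) y)
    (hgcont : ∀ x, Continuous (g x))
    (κ : ℝ) (Γ : Matrix (Fin n) (Fin n) ℝ)
    (hLSI : ∀ h : EuclideanSpace ℝ (Fin n) → ℝ, ContDiff ℝ 1 h →
      Integrable (fun y => h y ^ 2 * Real.log (h y ^ 2))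
        (volume.withDensity fun y => ENNReal.ofReal (πY y)) →
      Integrable (fun y => h y ^ 2)
        (volume.withDensity fun y => ENNReal.ofReal (πY y)) →
      Integrable (fun y => quadForm Γ (gradient h y))
        (volume.withDensity fun y => ENNReal.ofReal (πY y)) →
      entFun (volume.withDensity fun y => ENNReal.ofReal (πY y)) (fun y => h y ^ 2) ≤
        2 * κ * ∫ y, quadForm Γ (gradient h y)
          ∂(volume.withDensity fun y => ENNReal.ofReal (πY y)))
    (hMIint : Integrable (fun q : EuclideanSpace ℝ (Fin d) × EuclideanSpace ℝ (Fin n) =>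
      π q.1 q.2 * Real.log (π q.1 q.2 / (πX q.1 * πY q.2))))
    (hRHSint : Integrable (fun q : EuclideanSpace ℝ (Fin d) × EuclideanSpace ℝ (Fin n) =>
      quadForm Γ (g q.1 q.2) * π q.1 q.2)) :
    (∫ q : EuclideanSpace ℝ (Fin d) × EuclideanSpace ℝ (Fin n),
        π q.1 q.2 * Real.log (π q.1 q.2 / (πX q.1 * πY q.2))) ≤
      κ / 2 * ∫ q : EuclideanSpace ℝ (Fin d) × EuclideanSpace ℝ (Fin n),
        quadForm Γ (g q.1 q.2) * π q.1 q.2 := by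
  have hπint : Integrable (fun q : EuclideanSpace ℝ (Fin d) × EuclideanSpace ℝ (Fin n) =>
      π q.1 q.2) := by
    by_contra h
    simp [integral_undef h] at hπprob
  rw [Measure.volume_eq_prod] at hπint hMIint hRHSint ⊢
  have hπY_meas : Measurable πY := by
    rw [funext hπY]
    exact (hπmeas.stronglyMeasurable.integral_prod_left (μ := volume)).measurable
  have hπY_pos : ∀ᵐ y, 0 < πY y := by
    filter_upwards [hπint.prod_left_ae] with y hy
    exact hπY y ▸ integral_pos_of_forall_pos (fun x => hπpos x y) hy
  rw [integral_prod _ hMIint, integral_prod _ hRHSint, ← integral_const_mul]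
  refine integral_mono_ae hMIint.integral_prod_left
    (hRHSint.integral_prod_left.const_mul _) ?_
  filter_upwards [hπint.prod_right_ae, hMIint.prod_right_ae, hRHSint.prod_right_ae]
    with x hmass hent hfisher
  simp only [hπX] at hent ⊢
  exact integral_mul_log_div_le_of_logSobolev hπY_meas.aemeasurable hπY_pos (hπpos x) hLSI
    (hg x) (hgcont x) hmass hent hfisher

/-- If the marginal density `π_Y` satisfies a log-Sobolev inequality with constant `κ` and
matrix `Γ`, then `I(X;Y) ≤ (κ/2) ∫∫ ‖∇_y log π_{X|Y}(x|y)‖²_Γ π_{X,Y}(x,y) dx dy`. -/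
theorem mutual_information_le_of_log_sobolev
    {d n : ℕ}
    (π : EuclideanSpace ℝ (Fin d) → EuclideanSpace ℝ (Fin n) → ℝ)
    (hπmeas : Measurable (Function.uncurry π))
    (hπpos : ∀ x y, 0 < π x y)
    (hπprob : (∫ q : EuclideanSpace ℝ (Fin d) × EuclideanSpace ℝ (Fin n), π q.1 q.2) = 1)
    (πX : EuclideanSpace ℝ (Fin d) → ℝ) (hπX : ∀ x, πX x = ∫ y, π x y)
    (πY : EuclideanSpace ℝ (Fin n) → ℝ) (hπY : ∀ y, πY y = ∫ x, π x y)
    -- `g x y` is the gradient in `y` of `log π_{X|Y}(x|y)`, assumed to exist and be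
    -- continuous in `y` for each `x`
    (g : EuclideanSpace ℝ (Fin d) → EuclideanSpace ℝ (Fin n) → EuclideanSpace ℝ (Fin n))
    (hg : ∀ x y, HasGradientAt (fun y' => Real.log (π x y' / πY y')) (g x y) y)
    (hgcont : ∀ x, Continuous (g x))
    (κ : ℝ) (hκ : 1 ≤ κ) (Γ : Matrix (Fin n) (Fin n) ℝ) (hΓ : Γ.PosDef)
    (hLSI : ∀ h : EuclideanSpace ℝ (Fin n) → ℝ, ContDiff ℝ 1 h →
      Integrable (fun y => h y ^ 2 * Real.log (h y ^ 2))
        (volume.withDensity fun y => ENNReal.ofReal (πY y)) →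
      Integrable (fun y => h y ^ 2)
        (volume.withDensity fun y => ENNReal.ofReal (πY y)) →
      Integrable (fun y => quadForm Γ (gradient h y))
        (volume.withDensity fun y => ENNReal.ofReal (πY y)) →
      entFun (volume.withDensity fun y => ENNReal.ofReal (πY y)) (fun y => h y ^ 2) ≤
        2 * κ * ∫ y, quadForm Γ (gradient h y)
          ∂(volume.withDensity fun y => ENNReal.ofReal (πY y)))
    (hMIint : Integrable (fun q : EuclideanSpace ℝ (Fin d) × EuclideanSpace ℝ (Fin n) =>
      π q.1 q.2 * Real.log (π q.1 q.2 / (πX q.1 * πY q.2))))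
    (hRHSint : Integrable (fun q : EuclideanSpace ℝ (Fin d) × EuclideanSpace ℝ (Fin n) =>
      quadForm Γ (g q.1 q.2) * π q.1 q.2)) :
    (∫ q : EuclideanSpace ℝ (Fin d) × EuclideanSpace ℝ (Fin n),
        π q.1 q.2 * Real.log (π q.1 q.2 / (πX q.1 * πY q.2))) ≤
      κ / 2 * ∫ q : EuclideanSpace ℝ (Fin d) × EuclideanSpace ℝ (Fin n),
        quadForm Γ (g q.1 q.2) * π q.1 q.2 :=
  mutual_information_le_of_log_sobolev_general π hπmeas hπpos hπprob πX hπX πY hπY g hg hgcont κ Γ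
    hLSI hMIint hRHSint
end

section
/- Let Σ be a symmetric positive definite matrix whose index set is partitioned into three disjoint nonempty sets A, {i}, B. Then the Schur complements satisfy Σ_{B|A∪{i}} ⪯ Σ_{B|A} in the Loewner order; equivalently, Σ_{B|A} − Σ_{B|A∪{i}} is positive semidefinite. -/
/-!
Write `Σ_{AA}, Σ_{Ai}, Σ_{ii}, Σ_{BA}, Σ_{Bi}` for the blocks of `M`. By the block inverse formula,
conditioning on `A ∪ {i}` instead of `A` subtracts the extra term `w s⁻¹ wᴴ` from the Schur
complement, where `s = Σ_{ii} - Σ_{iA} Σ_{AA}⁻¹ Σ_{Ai}` is the Schur complement of `Σ_{AA}` in the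
block on `A ∪ {i}` and `w = Σ_{BA} Σ_{AA}⁻¹ Σ_{Ai} - Σ_{Bi}`. Since `s` is positive semidefinite,
so are `s⁻¹` and `w s⁻¹ wᴴ`.
-/

open Matrix

namespace Matrix

theorem submatrix_sumElim_sumElim {l o m₁ m₂ n₁ n₂ R : Type*} (M : Matrix l o R)
    (r₁ : m₁ → l) (r₂ : m₂ → l) (c₁ : n₁ → o) (c₂ : n₂ → o) :
    M.submatrix (Sum.elim r₁ r₂) (Sum.elim c₁ c₂) =
      fromBlocks (M.submatrix r₁ c₁) (M.submatrix r₁ c₂) (M.submatrix r₂ c₁)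
        (M.submatrix r₂ c₂) := by
  ext (i | i) (j | j) <;> rfl

theorem submatrix_sumElim_left {l o m₁ m₂ n R : Type*} (M : Matrix l o R)
    (r₁ : m₁ → l) (r₂ : m₂ → l) (c : n → o) :
    M.submatrix (Sum.elim r₁ r₂) c = fromRows (M.submatrix r₁ c) (M.submatrix r₂ c) := by
  ext (i | i) j <;> rfl

theorem submatrix_sumElim_right {l o m n₁ n₂ R : Type*} (M : Matrix l o R)
    (r : m → l) (c₁ : n₁ → o) (c₂ : n₂ → o) :
    M.submatrix r (Sum.elim c₁ c₂) = fromCols (M.submatrix r c₁) (M.submatrix r c₂) := by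
  ext i (j | j) <;> rfl

theorem IsHermitian.conjTranspose_submatrix {l m n R : Type*} [Star R] {M : Matrix n n R}
    (hM : M.IsHermitian) (r : l → n) (c : m → n) :
    (M.submatrix r c)ᴴ = M.submatrix c r := by
  rw [Matrix.conjTranspose_submatrix, hM.eq]

variable {l m n o : Type*} [Fintype m] [Fintype n] [DecidableEq m] [DecidableEq n]

theorem fromCols_mul_inv_fromBlocks_mul_fromRows {R : Type*} [CommRing R] {A : Matrix m m R}
    {B : Matrix m n R} {C : Matrix n m R} {D : Matrix n n R} (hA : IsUnit A)
    (hABCD : IsUnit (fromBlocks A B C D)) (U : Matrix l m R) (V : Matrix l n R)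
    (X : Matrix m o R) (Y : Matrix n o R) :
    fromCols U V * (fromBlocks A B C D)⁻¹ * fromRows X Y =
      U * A⁻¹ * X + (U * A⁻¹ * B - V) * (D - C * A⁻¹ * B)⁻¹ * (C * A⁻¹ * X - Y) := by
  let := hA.invertible
  let := hABCD.invertible
  let := invertibleOfFromBlocks₁₁Invertible A B C D
  rw [← invOf_eq_nonsing_inv (fromBlocks A B C D), invOf_fromBlocks₁₁_eq,
    fromCols_mul_fromBlocks, fromCols_mul_fromRows]
  simp only [invOf_eq_nonsing_inv, Matrix.sub_mul, Matrix.mul_sub, Matrix.add_mul,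
    Matrix.mul_add, Matrix.neg_mul, Matrix.mul_neg, Matrix.mul_assoc]
  abel

theorem PosDef.posSemidef_fromCols_mul_inv_mul_conjTranspose_sub [Fintype l] {K : Type*}
    [Field K] [PartialOrder K] [StarRing K] [StarOrderedRing K] {A : Matrix m m K}
    {B : Matrix m n K} {D : Matrix n n K} (hM : (fromBlocks A B Bᴴ D).PosDef)
    (U : Matrix l m K) (V : Matrix l n K) :
    (fromCols U V * (fromBlocks A B Bᴴ D)⁻¹ * (fromCols U V)ᴴ - U * A⁻¹ * Uᴴ).PosSemidef := by
  have hA : A.PosDef := hM.submatrix Sum.inl_injective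
  let := hA.isUnit.invertible
  have hSchur_inv : (D - Bᴴ * A⁻¹ * B)⁻¹.PosSemidef :=
    ((PosDef.fromBlocks₁₁ B D hA).mp hM.posSemidef).inv
  have hW : Bᴴ * A⁻¹ * Uᴴ - Vᴴ = (U * A⁻¹ * B - V)ᴴ := by
    simp only [conjTranspose_sub, conjTranspose_mul, hA.isHermitian.inv.eq, Matrix.mul_assoc]
  rw [conjTranspose_fromCols_eq_fromRows_conjTranspose,
    fromCols_mul_inv_fromBlocks_mul_fromRows hA.isUnit hM.isUnit, add_sub_cancel_left, hW]
  exact hSchur_inv.mul_mul_conjTranspose_same _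

end Matrix

theorem schur_complement_loewner_mono_general
    {α β : Type*} [Fintype α] [Fintype β] [DecidableEq α]
    (M : Matrix (α ⊕ (Unit ⊕ β)) (α ⊕ (Unit ⊕ β)) ℝ)
    (hMpd : M.PosDef)
    -- embeddings of the index blocks `A`, `B`, and `A ∪ {i}`
    (eA : α → α ⊕ (Unit ⊕ β)) (heA : eA = Sum.inl)
    (eB : β → α ⊕ (Unit ⊕ β)) (heB : eB = fun b => Sum.inr (Sum.inr b))
    (eAi : α ⊕ Unit → α ⊕ (Unit ⊕ β))
    (heAi : eAi = Sum.elim Sum.inl (fun u => Sum.inr (Sum.inl u))) :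
    ((M.submatrix eB eB -
        M.submatrix eB eA * (M.submatrix eA eA)⁻¹ * M.submatrix eA eB) -
      (M.submatrix eB eB -
        M.submatrix eB eAi * (M.submatrix eAi eAi)⁻¹ * M.submatrix eAi eB)).PosSemidef := by
  subst heA heB heAi
  set eI : Unit → α ⊕ (Unit ⊕ β) := fun u => Sum.inr (Sum.inl u)
  have hM := hMpd.isHermitian
  have hAi : (M.submatrix (Sum.elim Sum.inl eI) (Sum.elim Sum.inl eI)).PosDef :=
    hMpd.submatrix <| Sum.inl_injective.sumElim (Sum.inr_injective.comp Sum.inl_injective)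
      fun _ _ => Sum.inl_ne_inr
  rw [submatrix_sumElim_sumElim, ← hM.conjTranspose_submatrix Sum.inl eI] at hAi
  rw [sub_sub_sub_cancel_left, submatrix_sumElim_sumElim, submatrix_sumElim_right,
    submatrix_sumElim_left, ← hM.conjTranspose_submatrix Sum.inl eI]
  simpa only [conjTranspose_fromCols_eq_fromRows_conjTranspose, hM.conjTranspose_submatrix] using
    hAi.posSemidef_fromCols_mul_inv_mul_conjTranspose_sub (M.submatrix _ Sum.inl)
      (M.submatrix _ eI)

/-- **Monotonicity of Schur complements under extra conditioning.** For a symmetric positive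
definite matrix `M` whose index set is partitioned into `A` (type `α`), `{i}` (type `Unit`),
and `B` (type `β`), the Schur complements satisfy `Σ_{B|A∪{i}} ⪯ Σ_{B|A}` in the Loewner
order, i.e. `Σ_{B|A} - Σ_{B|A∪{i}}` is positive semidefinite. -/
theorem schur_complement_loewner_mono
    {α β : Type*} [Fintype α] [Fintype β] [DecidableEq α] [DecidableEq β]
    [Nonempty α] [Nonempty β]
    (M : Matrix (α ⊕ (Unit ⊕ β)) (α ⊕ (Unit ⊕ β)) ℝ)
    (hM : M.IsSymm) (hMpd : M.PosDef)
    -- embeddings of the index blocks `A`, `B`, and `A ∪ {i}`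
    (eA : α → α ⊕ (Unit ⊕ β)) (heA : eA = Sum.inl)
    (eB : β → α ⊕ (Unit ⊕ β)) (heB : eB = fun b => Sum.inr (Sum.inr b))
    (eAi : α ⊕ Unit → α ⊕ (Unit ⊕ β))
    (heAi : eAi = Sum.elim Sum.inl (fun u => Sum.inr (Sum.inl u))) :
    ((M.submatrix eB eB -
        M.submatrix eB eA * (M.submatrix eA eA)⁻¹ * M.submatrix eA eB) -
      (M.submatrix eB eB -
        M.submatrix eB eAi * (M.submatrix eAi eAi)⁻¹ * M.submatrix eAi eB)).PosSemidef :=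
  schur_complement_loewner_mono_general M hMpd eA heA eB heB eAi heAi
end
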